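/- arXiv:1007.4553 — 2 statements merged into one kernel-verified Lean document; each statement's English description precedes it below -/
import Mathlib

section
/- Let 1 ≤ p < ∞, let Y be a Banach space, and let ι : Y → L^p(𝕋) be a compact continuous linear operator (a compact embedding of Y into L^p of the circle). Then there exists a sequence (εₙ)ₙ∈ℤ of positive reals, decreasing to 0 as |n| → ∞, such that |cₙ(ι(y))| ≤ ε_{|n|} · ‖y‖_Y for every n ∈ ℤ and every y ∈ Y, where cₙ(f) = (1/2π)∫₀^{2π} f(t) e^{−int} dt is the n-th Fourier coefficient. -/
/-!
The `n`-th Fourier coefficient is a functional `cₙ` of norm at most `1` on `Lᵖ(𝕋)`, and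
`cₙ f → 0` as `|n| → ∞` for every `f` (Riemann–Lebesgue: this holds for trigonometric
polynomials, which are dense, and the set where it holds is closed since the `cₙ` are
equicontinuous). A compact operator turns such a bounded, pointwise null family into one that is
null in operator norm, so `‖cₙ ∘ ι‖ → 0`; the required `ε` is any positive antitone null majorant
of `n ↦ ‖cₙ ∘ ι‖`, e.g. its tail suprema plus `1 / (|n| + 1)`.
-/

open MeasureTheory AddCircle Filter Topology Set
open scoped ENNReal

theorem exists_antitone_majorant_of_tendsto_atTop {b : ℕ → ℝ} (hb : Tendsto b atTop (𝓝 0)) :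
    ∃ ε : ℕ → ℝ, (∀ n, 0 < ε n) ∧ Antitone ε ∧ Tendsto ε atTop (𝓝 0) ∧ ∀ n, |b n| ≤ ε n := by
  have hb_abs : Tendsto (fun n ↦ |b n|) atTop (𝓝 0) := by simpa using hb.abs
  have hbdd : ∀ N, BddAbove (range fun m ↦ |b (m + N)|) := fun N ↦
    (hb_abs.comp (tendsto_add_atTop_nat N)).bddAbove_range
  set tail : ℕ → ℝ := fun N ↦ ⨆ m, |b (m + N)|
  have le_tail : ∀ N, |b N| ≤ tail N := fun N ↦ by simpa using le_ciSup (hbdd N) 0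
  have tail_anti : Antitone tail := fun N N' hN ↦ ciSup_le fun m ↦ by
    simpa [add_assoc, Nat.sub_add_cancel hN] using le_ciSup (hbdd N) (m + (N' - N))
  have tail_lim : Tendsto tail atTop (𝓝 0) := by
    refine tendsto_order.2 ⟨fun c hc ↦ .of_forall fun N ↦
      hc.trans_le ((abs_nonneg _).trans (le_tail N)), fun c hc ↦ ?_⟩
    obtain ⟨c', hc', hc'c⟩ := exists_between hc
    obtain ⟨K, hK⟩ := eventually_atTop.1 (hb_abs.eventually (ge_mem_nhds hc'))
    exact eventually_atTop.2 ⟨K, fun N hN ↦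
      (ciSup_le fun m ↦ hK _ (by omega)).trans_lt hc'c⟩
  have inv_lim : Tendsto (fun n : ℕ ↦ ((n : ℝ) + 1)⁻¹) atTop (𝓝 0) := by
    simpa [one_div] using tendsto_one_div_add_atTop_nhds_zero_nat (𝕜 := ℝ)
  refine ⟨fun n ↦ tail n + ((n : ℝ) + 1)⁻¹, fun n ↦ ?_, fun m n hmn ↦ ?_, ?_, fun n ↦ ?_⟩
  · have := (abs_nonneg _).trans (le_tail n)
    positivity
  · exact add_le_add (tail_anti hmn) (by gcongr)
  · simpa using tail_lim.add inv_lim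
  · linarith [le_tail n, inv_nonneg.2 (by positivity : (0 : ℝ) ≤ n + 1)]

theorem exists_antitone_majorant_of_tendsto_cofinite {a : ℤ → ℝ}
    (ha : Tendsto a cofinite (𝓝 0)) :
    ∃ ε : ℕ → ℝ, (∀ n, 0 < ε n) ∧ Antitone ε ∧ Tendsto ε atTop (𝓝 0) ∧
      ∀ n, a n ≤ ε n.natAbs := by
  have h_pos : Tendsto (fun m : ℕ ↦ a m) atTop (𝓝 0) := by
    rw [← Nat.cofinite_eq_atTop]
    exact ha.comp Nat.cast_injective.tendsto_cofinite
  have h_neg : Tendsto (fun m : ℕ ↦ a (-m)) atTop (𝓝 0) := by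
    rw [← Nat.cofinite_eq_atTop]
    exact ha.comp (neg_injective.comp Nat.cast_injective).tendsto_cofinite
  obtain ⟨ε, hpos, hanti, hlim, hle⟩ := exists_antitone_majorant_of_tendsto_atTop
    (b := fun m ↦ max |a m| |a (-m)|) (by simpa using h_pos.abs.max h_neg.abs)
  refine ⟨ε, hpos, hanti, hlim, fun n ↦ (le_abs_self _).trans ?_⟩
  obtain ⟨k, rfl | rfl⟩ := Int.eq_nat_or_neg n
  · simpa using (le_max_left _ _).trans ((le_abs_self _).trans (hle k))
  · simpa using (le_max_right _ _).trans ((le_abs_self _).trans (hle k))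

theorem IsCompactOperator.tendsto_norm_comp_of_tendsto_zero
    {𝕜 E F G ι : Type*} [NontriviallyNormedField 𝕜] [NormedAlgebra ℝ 𝕜]
    [NormedAddCommGroup E] [NormedSpace 𝕜 E] [NormedAddCommGroup F] [NormedSpace 𝕜 F]
    [NormedAddCommGroup G] [NormedSpace 𝕜 G]
    {T : E →L[𝕜] F} (hT : IsCompactOperator T) {l : Filter ι} {A : ι → F →L[𝕜] G} {C : ℝ}
    (hA : ∀ i, ‖A i‖ ≤ C) (hlim : ∀ x, Tendsto (fun i ↦ A i x) l (𝓝 0)) :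
    Tendsto (fun i ↦ ‖(A i).comp T‖) l (𝓝 0) := by
  refine Metric.tendsto_nhds.2 fun r hr ↦ ?_
  set δ := r / (2 * (|C| + 1)) with hδ_def
  have hδ : 0 < δ := by positivity
  obtain ⟨t, ht, hcover⟩ := Metric.totallyBounded_iff.1
    (totallyBounded_closure.1 (hT.isCompact_closure_image_closedBall 1).totallyBounded) δ hδ
  have hsmall : ∀ᶠ i in l, ∀ x ∈ t, ‖A i x‖ < δ :=
    (eventually_all_finite ht).2 fun x _ ↦ (hlim x).norm.eventually (gt_mem_nhds (by simpa))
  filter_upwards [hsmall] with i hi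
  have hbound : ‖(A i).comp T‖ ≤ (|C| + 1) * δ := by
    refine ContinuousLinearMap.opNorm_le_of_unit_norm (by positivity) fun y hy ↦ ?_
    obtain ⟨x, hxt, hyx⟩ := mem_iUnion₂.1 (hcover ⟨y, by simp [hy], rfl⟩)
    calc ‖A i (T y)‖ = ‖A i (T y - x) + A i x‖ := by rw [map_sub, sub_add_cancel]
      _ ≤ ‖A i‖ * ‖T y - x‖ + δ := norm_add_le_of_le ((A i).le_opNorm _) (hi x hxt).le
      _ ≤ |C| * δ + δ := by
          gcongr
          · exact (hA i).trans (le_abs_self C)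
          · exact (dist_eq_norm (T y) x ▸ Metric.mem_ball.1 hyx).le
      _ = (|C| + 1) * δ := by ring
  rw [dist_zero_right, norm_norm]
  calc _ ≤ (|C| + 1) * δ := hbound
    _ = r / 2 := by rw [hδ_def]; field_simp
    _ < r := half_lt_self hr

theorem MeasureTheory.Lp.integral_norm_le_norm {α E : Type*} [MeasurableSpace α]
    {μ : Measure α} [IsProbabilityMeasure μ] [NormedAddCommGroup E] {p : ℝ≥0∞} [Fact (1 ≤ p)]
    (f : Lp E p μ) : ∫ x, ‖f x‖ ∂μ ≤ ‖f‖ := by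
  rw [integral_norm_eq_lintegral_enorm (Lp.aestronglyMeasurable f),
    ← eLpNorm_one_eq_lintegral_enorm, Lp.norm_def]
  exact ENNReal.toReal_mono (Lp.eLpNorm_ne_top f)
    (eLpNorm_le_eLpNorm_of_exponent_le Fact.out (Lp.aestronglyMeasurable f))

namespace AddCircle

variable {T : ℝ} [Fact (0 < T)]

theorem norm_fourierCoeff_le_integral_norm {E : Type*} [NormedAddCommGroup E] [NormedSpace ℂ E]
    (f : AddCircle T → E) (n : ℤ) : ‖fourierCoeff f n‖ ≤ ∫ t, ‖f t‖ ∂haarAddCircle := by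
  refine (norm_integral_le_integral_norm _).trans_eq (integral_congr_ae (.of_forall fun t ↦ ?_))
  simp [norm_smul, Circle.norm_coe]

variable {p : ℝ≥0∞} [Fact (1 ≤ p)]

noncomputable def fourierCoeffCLM (n : ℤ) : Lp ℂ p (@haarAddCircle T _) →L[ℂ] ℂ :=
  LinearMap.mkContinuous
    { toFun f := fourierCoeff f n
      map_add' f g := by
        rw [fourierCoeff_congr_ae (Lp.coeFn_add f g),
          fourierCoeff.add ((Lp.memLp f).integrable Fact.out) ((Lp.memLp g).integrable Fact.out)]
        rfl
      map_smul' c f := by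
        rw [fourierCoeff_congr_ae (Lp.coeFn_smul c f)]
        exact fourierCoeff.const_smul _ _ _ }
    1 fun f ↦ by
      simpa using (norm_fourierCoeff_le_integral_norm f n).trans (Lp.integral_norm_le_norm f)

@[simp]
theorem fourierCoeffCLM_apply (n : ℤ) (f : Lp ℂ p (@haarAddCircle T _)) :
    fourierCoeffCLM n f = fourierCoeff f n :=
  rfl

theorem norm_fourierCoeffCLM_le (n : ℤ) :
    ‖(fourierCoeffCLM n : Lp ℂ p (@haarAddCircle T _) →L[ℂ] ℂ)‖ ≤ 1 :=
  LinearMap.mkContinuous_norm_le _ zero_le_one _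

theorem tendsto_fourierCoeff_cofinite (hp : p ≠ ∞) (f : Lp ℂ p (@haarAddCircle T _)) :
    Tendsto (fourierCoeff f) cofinite (𝓝 0) := by
  let decaying : Submodule ℂ (Lp ℂ p (@haarAddCircle T _)) :=
    { carrier := {f | Tendsto (fun n ↦ fourierCoeffCLM n f) cofinite (𝓝 0)}
      add_mem' hf hg := by simpa only [mem_ofPred_eq, map_add, add_zero] using Tendsto.add hf hg
      zero_mem' := by simpa only [mem_ofPred_eq, map_zero] using tendsto_const_nhds
      smul_mem' c f hf := by
        simpa only [mem_ofPred_eq, map_smul, smul_zero] using Tendsto.const_smul hf c }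
  have equicont : Equicontinuous fun n : ℤ ↦
      ⇑(fourierCoeffCLM n : Lp ℂ p (@haarAddCircle T _) →L[ℂ] ℂ) :=
    ((NormedSpace.equicontinuous_TFAE (fun n : ℤ ↦
      (fourierCoeffCLM n : Lp ℂ p (@haarAddCircle T _) →L[ℂ] ℂ))).out 5 1).1
        (by exact ⟨1, norm_fourierCoeffCLM_le⟩)
  have monomials : Submodule.span ℂ (range (@fourierLp T _ p _)) ≤ decaying := by
    refine Submodule.span_le.2 ?_
    rintro _ ⟨m, rfl⟩
    refine tendsto_const_nhds.congr' ((eventually_cofinite_ne m).mono fun n hn ↦ ?_)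
    dsimp only
    rw [fourierCoeffCLM_apply, fourierCoeff_congr_ae (coeFn_fourierLp p m), fourierCoeff_fourier,
      Pi.single_eq_of_ne hn]
  have : decaying = ⊤ := top_le_iff.1 <| span_fourierLp_closure_eq_top (T := T) hp ▸
    Submodule.topologicalClosure_minimal _ monomials
      (equicont.isClosed_setOfPred_tendsto continuous_const)
  exact (this ▸ Submodule.mem_top : f ∈ decaying)

end AddCircle

local instance : Fact (0 < 2 * Real.pi) := ⟨by positivity⟩

theorem fourier_coefficients_uniform_decay_on_compact_embedding_general
    (p : ENNReal) [Fact (1 ≤ p)] (hp : p ≠ ⊤)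
    {Y : Type} [NormedAddCommGroup Y] [NormedSpace ℂ Y]
    (ι : Y →L[ℂ] Lp ℂ p (@haarAddCircle (2 * Real.pi) _))
    (hι : IsCompactOperator ι) :
    ∃ ε : ℕ → ℝ, (∀ n, 0 < ε n) ∧ Antitone ε ∧ Tendsto ε atTop (𝓝 0) ∧
      ∀ (n : ℤ) (y : Y), ‖fourierCoeff (⇑(ι y)) n‖ ≤ ε n.natAbs * ‖y‖ := by
  have coeff_norm_decay : Tendsto (fun n : ℤ ↦ ‖(fourierCoeffCLM n).comp ι‖) cofinite (𝓝 0) :=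
    hι.tendsto_norm_comp_of_tendsto_zero norm_fourierCoeffCLM_le (tendsto_fourierCoeff_cofinite hp)
  obtain ⟨ε, hε_pos, hε_anti, hε_lim, hε_ge⟩ :=
    exists_antitone_majorant_of_tendsto_cofinite coeff_norm_decay
  refine ⟨ε, hε_pos, hε_anti, hε_lim, fun n y ↦ ?_⟩
  calc ‖fourierCoeff (⇑(ι y)) n‖ = ‖(fourierCoeffCLM n).comp ι y‖ := rfl
    _ ≤ ‖(fourierCoeffCLM n).comp ι‖ * ‖y‖ := ContinuousLinearMap.le_opNorm _ _
    _ ≤ ε n.natAbs * ‖y‖ := by gcongr; exact hε_ge n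

theorem fourier_coefficients_uniform_decay_on_compact_embedding
    (p : ENNReal) [Fact (1 ≤ p)] (hp : p ≠ ⊤)
    {Y : Type} [NormedAddCommGroup Y] [NormedSpace ℂ Y] [CompleteSpace Y]
    (ι : Y →L[ℂ] Lp ℂ p (@haarAddCircle (2 * Real.pi) _))
    (hι : IsCompactOperator ι) :
    ∃ ε : ℕ → ℝ, (∀ n, 0 < ε n) ∧ Antitone ε ∧ Tendsto ε atTop (𝓝 0) ∧
      ∀ (n : ℤ) (y : Y), ‖fourierCoeff (⇑(ι y)) n‖ ≤ ε n.natAbs * ‖y‖ :=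
  fourier_coefficients_uniform_decay_on_compact_embedding_general p hp ι hι
end

section
/- Let H be a Hilbert space over ℂ and let (φₙ)ₙ∈ℕ be a frame for H with frame constants A, B > 0, i.e., A‖x‖² ≤ Σₙ |⟨x, φₙ⟩|² ≤ B‖x‖² for all x ∈ H. Let Y be a Banach space and let ι : Y → H be a compact continuous linear operator (a compact embedding of Y into H). Then there exists a sequence (εₙ) of positive reals decreasing to 0 such that |⟨ι(y), φₙ⟩| ≤ εₙ · ‖y‖_Y for every n ∈ ℕ and every y ∈ Y. -/
/-!
Each coefficient functional `x ↦ ⟪φ n, x⟫` tends to `0` pointwise, because the coefficient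
sequence of every `x` is square-summable. By Banach–Steinhaus these functionals are uniformly
bounded, hence equicontinuous, so the pointwise convergence is uniform on the compact closure of
the image of the unit ball of `Y`. Thus the functionals composed with `ι` tend to `0` in norm,
and the tail suprema of these norms, made strictly positive by adding `1 / (n + 1)`, give `ε`.
-/

open Filter Topology

local notation "⟪" x ", " y "⟫" => @inner ℂ _ _ x y

theorem tendsto_nhds_zero_of_forall_eventually_le {α : Type*} {l : Filter α} {u : α → ℝ}
    (h0 : ∀ x, 0 ≤ u x) (h : ∀ δ > 0, ∀ᶠ x in l, u x ≤ δ) : Tendsto u l (𝓝 0) :=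
  Metric.tendsto_nhds.2 fun δ hδ ↦ (h (δ / 2) (half_pos hδ)).mono fun x hx ↦ by
    rw [Real.dist_eq, sub_zero, abs_of_nonneg (h0 x)]
    linarith

theorem exists_antitone_pos_tendsto_zero_ge {g : ℕ → ℝ} (hg : Tendsto g atTop (𝓝 0)) :
    ∃ ε : ℕ → ℝ, (∀ n, 0 < ε n) ∧ Antitone ε ∧ Tendsto ε atTop (𝓝 0) ∧ ∀ n, g n ≤ ε n := by
  have hg_abs : Tendsto (|g ·|) atTop (𝓝 0) := (tendsto_zero_iff_abs_tendsto_zero g).1 hg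
  set s : ℕ → ℝ := fun n ↦ sSup ((|g ·|) '' Set.Ici n)
  have hbdd : ∀ n, BddAbove ((|g ·|) '' Set.Ici n) := fun n ↦
    hg_abs.bddAbove_range.mono (Set.image_subset_range _ _)
  have hle : ∀ {m n}, n ≤ m → |g m| ≤ s n := fun h ↦ le_csSup (hbdd _) ⟨_, h, rfl⟩
  have hs_nonneg : ∀ n, 0 ≤ s n := fun n ↦ (abs_nonneg _).trans (hle le_rfl)
  have hs_anti : Antitone s := fun m n hmn ↦
    csSup_le_csSup (hbdd m) ⟨_, n, Set.self_mem_Ici, rfl⟩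
      (Set.image_mono (Set.Ici_subset_Ici.2 hmn))
  have hs_tendsto : Tendsto s atTop (𝓝 0) := by
    refine tendsto_nhds_zero_of_forall_eventually_le hs_nonneg fun δ hδ ↦ ?_
    obtain ⟨N, hN⟩ := eventually_atTop.1 (hg_abs.eventually (ge_mem_nhds hδ))
    exact eventually_atTop.2 ⟨N, fun n hn ↦ csSup_le ⟨_, n, Set.self_mem_Ici, rfl⟩
      (Set.forall_mem_image.2 fun m hm ↦ hN m (hn.trans hm))⟩
  have hinv_anti : Antitone fun n : ℕ ↦ 1 / ((n : ℝ) + 1) := fun m n hmn ↦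
    one_div_le_one_div_of_le (by positivity) (by exact_mod_cast Nat.succ_le_succ hmn)
  have hinv_pos : ∀ n : ℕ, 0 < 1 / ((n : ℝ) + 1) := fun n ↦ by positivity
  refine ⟨fun n ↦ s n + 1 / ((n : ℝ) + 1), fun n ↦ ?_, hs_anti.add hinv_anti, ?_, fun n ↦ ?_⟩
  · linarith [hs_nonneg n, hinv_pos n]
  · simpa using hs_tendsto.add tendsto_one_div_add_atTop_nhds_zero_nat
  · linarith [le_abs_self (g n), hle (le_refl n), hinv_pos n]

section

variable {𝕜 E F G : Type*} [RCLike 𝕜]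
  [NormedAddCommGroup E] [NormedSpace 𝕜 E] [NormedAddCommGroup F] [NormedSpace 𝕜 F]
  [NormedAddCommGroup G] [NormedSpace 𝕜 G]

theorem ContinuousLinearMap.tendstoUniformlyOn_zero_of_norm_le {ι : Type*} {l : Filter ι}
    {T : ι → F →L[𝕜] G} {C : ℝ} (hC : ∀ i, ‖T i‖ ≤ C)
    (hT : ∀ x, Tendsto (fun i ↦ T i x) l (𝓝 0)) {K : Set F} (hK : IsCompact K) :
    TendstoUniformlyOn (fun i x ↦ T i x) 0 l K := by
  have : CompactSpace K := isCompact_iff_compactSpace.mp hK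
  have hequi : Equicontinuous (fun i x ↦ T i x) :=
    ((NormedSpace.equicontinuous_TFAE T).out 5 1).mp (by exact ⟨C, hC⟩)
  have hequiK : Equicontinuous (fun i (x : K) ↦ T i x) :=
    (equicontinuous_restrict_iff _).mpr (hequi.equicontinuousOn K)
  rw [tendstoUniformlyOn_iff_tendstoUniformly_comp_coe]
  exact UniformFun.tendsto_iff_tendstoUniformly.mp
    ((hequiK.tendsto_uniformFun_iff_pi l 0).mpr (tendsto_pi_nhds.mpr fun x ↦ hT x))

theorem IsCompactOperator.tendsto_norm_comp [CompleteSpace F] {ι : E →L[𝕜] F}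
    (hι : IsCompactOperator ι) {T : ℕ → F →L[𝕜] G}
    (hT : ∀ x, Tendsto (fun n ↦ T n x) atTop (𝓝 0)) :
    Tendsto (fun n ↦ ‖(T n).comp ι‖) atTop (𝓝 0) := by
  obtain ⟨C, hC⟩ : ∃ C, ∀ n, ‖T n‖ ≤ C := banach_steinhaus fun x ↦ by
    simpa [bddAbove_def] using (hT x).norm.bddAbove_range
  have hK := hι.isCompact_closure_image_closedBall 1
  have hunif := Metric.tendstoUniformlyOn_iff.mp
    (ContinuousLinearMap.tendstoUniformlyOn_zero_of_norm_le hC hT hK)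
  refine tendsto_nhds_zero_of_forall_eventually_le (fun _ ↦ norm_nonneg _) fun δ hδ ↦ ?_
  filter_upwards [hunif δ hδ] with n hn
  refine ContinuousLinearMap.opNorm_le_of_unit_norm hδ.le fun y hy ↦ ?_
  have hy_mem : ι y ∈ closure (ι '' Metric.closedBall 0 1) :=
    subset_closure ⟨y, by simp [hy], rfl⟩
  simpa using (hn (ι y) hy_mem).le

end

theorem frame_coefficients_uniform_decay_on_compact_embedding_general
    {H Y : Type*} [NormedAddCommGroup H] [InnerProductSpace ℂ H] [CompleteSpace H]
    [NormedAddCommGroup Y] [NormedSpace ℂ Y]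
    (φ : ℕ → H)
    (hsum : ∀ x : H, Summable (fun n => ‖⟪x, φ n⟫‖ ^ 2))
    (ι : Y →L[ℂ] H) (hι : IsCompactOperator ι) :
    ∃ ε : ℕ → ℝ, (∀ n, 0 < ε n) ∧ Antitone ε ∧ Tendsto ε atTop (𝓝 0) ∧
      ∀ (n : ℕ) (y : Y), ‖⟪ι y, φ n⟫‖ ≤ ε n * ‖y‖ := by
  set T : ℕ → H →L[ℂ] ℂ := fun n ↦ innerSL ℂ (φ n)
  have hT : ∀ x, Tendsto (fun n ↦ T n x) atTop (𝓝 0) := fun x ↦ by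
    rw [tendsto_zero_iff_norm_tendsto_zero]
    simpa [T, norm_inner_symm, Real.sqrt_sq_eq_abs] using (hsum x).tendsto_atTop_zero.sqrt
  obtain ⟨ε, hpos, hanti, hlim, hdom⟩ :=
    exists_antitone_pos_tendsto_zero_ge (hι.tendsto_norm_comp hT)
  refine ⟨ε, hpos, hanti, hlim, fun n y ↦ ?_⟩
  calc ‖⟪ι y, φ n⟫‖ = ‖(T n).comp ι y‖ := norm_inner_symm _ _
    _ ≤ ‖(T n).comp ι‖ * ‖y‖ := (T n).comp ι |>.le_opNorm y
    _ ≤ ε n * ‖y‖ := by gcongr; exact hdom n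

theorem frame_coefficients_uniform_decay_on_compact_embedding
    {H Y : Type*} [NormedAddCommGroup H] [InnerProductSpace ℂ H] [CompleteSpace H]
    [NormedAddCommGroup Y] [NormedSpace ℂ Y] [CompleteSpace Y]
    (φ : ℕ → H) (A B : ℝ) (hA : 0 < A) (hB : 0 < B)
    (hsum : ∀ x : H, Summable (fun n => ‖⟪x, φ n⟫‖ ^ 2))
    (hframe : ∀ x : H,
      A * ‖x‖ ^ 2 ≤ ∑' n : ℕ, ‖⟪x, φ n⟫‖ ^ 2 ∧
      ∑' n : ℕ, ‖⟪x, φ n⟫‖ ^ 2 ≤ B * ‖x‖ ^ 2)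
    (ι : Y →L[ℂ] H) (hι : IsCompactOperator ι) :
    ∃ ε : ℕ → ℝ, (∀ n, 0 < ε n) ∧ Antitone ε ∧ Tendsto ε atTop (𝓝 0) ∧
      ∀ (n : ℕ) (y : Y), ‖⟪ι y, φ n⟫‖ ≤ ε n * ‖y‖ :=
  frame_coefficients_uniform_decay_on_compact_embedding_general φ hsum ι hι
end
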